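/- Let C be a symmetric monoidal category. With Type given its cartesian (symmetric) monoidal structure and Fam(C) the fiberwise symmetric monoidal structure, the functor p : Type ⥤ Fam(C) is strong symmetric monoidal (the structure map p PUnit ≅ (PUnit, fun _ => 𝟙_C) is the identity-index isomorphism, and p X ⊗ p Y ≅ p (X × Y) is given by the identity on index types and the left unitor λ_𝟙 : 𝟙_C ⊗ 𝟙_C ≅ 𝟙_C on fibers), and the adjunction p ⊣ ♭ is a monoidal adjunction; hence (Fam(C), p ⊣ ♭) is a linear-non-linear model in the sense of Benton. -/

import Mathlib

open CategoryTheory CategoryTheory.Limits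

universe w v u

/-- The category `Fam(C)` of families of objects of `C`: an object is a pair
`(X, A)` of a (index) type `X` and a family `A : X → C` of objects of `C`. -/
structure Fam (C : Type u) [CategoryTheory.Category.{v} C] : Type (max (w + 1) u) where
  /-- the index type -/
  idx : Type w
  /-- the family of fibers -/
  fib : idx → C

namespace Fam

variable {C : Type u} [CategoryTheory.Category.{v} C]

/-- A morphism `(X, A) ⟶ (Y, B)` in `Fam(C)` is a pair of a function
`f₀ : X → Y` together with morphisms `f x : A x ⟶ B (f₀ x)` of `C`. -/
instance : CategoryTheory.Category.{max w v} (Fam.{w} C) where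
  Hom A B := Σ f₀ : A.idx → B.idx, ∀ x, A.fib x ⟶ B.fib (f₀ x)
  id A := ⟨fun x => x, fun x => 𝟙 (A.fib x)⟩
  comp f g := ⟨fun x => g.1 (f.1 x), fun x => f.2 x ≫ g.2 (f.1 x)⟩
  id_comp f := congrArg (Sigma.mk f.1) (funext fun x => CategoryTheory.Category.id_comp (f.2 x))
  comp_id f := congrArg (Sigma.mk f.1) (funext fun x => CategoryTheory.Category.comp_id (f.2 x))
  assoc _ _ _ := congrArg (Sigma.mk _) (funext fun _ => CategoryTheory.Category.assoc _ _ _)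

end Fam

namespace Fam

open MonoidalCategory

variable {C : Type u} [Category.{v} C] [MonoidalCategory C]

/-- The fiberwise tensor product on `Fam(C)`:
`(X, A) ⊗ (Y, B) := (X × Y, fun (x, y) => A x ⊗ B y)`. -/
def tensorObj' (A B : Fam.{w} C) : Fam.{w} C :=
  ⟨A.idx × B.idx, fun p => A.fib p.1 ⊗ B.fib p.2⟩

/-- The fiberwise tensor product of morphisms of `Fam(C)`. -/
def tensorHom' {A A' B B' : Fam.{w} C} (f : A ⟶ A') (g : B ⟶ B') :
    tensorObj' A B ⟶ tensorObj' A' B' :=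
  ⟨fun p => (f.1 p.1, g.1 p.2), fun p => f.2 p.1 ⊗ₘ g.2 p.2⟩

/-- The tensor unit of `Fam(C)`: `(PUnit, fun _ => 𝟙_C)`. -/
def unitObj : Fam.{w} C := ⟨PUnit, fun _ => 𝟙_ C⟩

/-- The associator of `Fam(C)`: the evident bijection of product types on
indices, and the associator of `C` on fibers. -/
def assocHom (A B D : Fam.{w} C) :
    tensorObj' (tensorObj' A B) D ⟶ tensorObj' A (tensorObj' B D) :=
  ⟨fun p => (p.1.1, (p.1.2, p.2)), fun _ => (α_ _ _ _).hom⟩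

/-- The left unitor of `Fam(C)`: the evident bijection on indices, and the
left unitor of `C` on fibers. -/
def leftUnitorHom (A : Fam.{w} C) : tensorObj' unitObj A ⟶ A :=
  ⟨fun p => p.2, fun _ => (λ_ _).hom⟩

/-- The right unitor of `Fam(C)`: the evident bijection on indices, and the
right unitor of `C` on fibers. -/
def rightUnitorHom (A : Fam.{w} C) : tensorObj' A unitObj ⟶ A :=
  ⟨fun p => p.1, fun _ => (ρ_ _).hom⟩

/-- The braiding of `Fam(C)`: the swap bijection of product types on indices,
and the braiding of `C` on fibers. -/
def braidHom [SymmetricCategory C] (A B : Fam.{w} C) :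
    tensorObj' A B ⟶ tensorObj' B A :=
  ⟨fun p => (p.2, p.1), fun _ => (β_ _ _).hom⟩

end Fam

namespace Fam

open MonoidalCategory

variable (C : Type u) [Category.{v} C] [MonoidalCategory C]

/-- The functor `p : Type ⥤ Fam(C)` sending `X` to the constantly-unit family
`(X, fun _ => 𝟙_ C)`. -/
def p : Type v ⥤ Fam.{v} C where
  obj X := ⟨X, fun _ => 𝟙_ C⟩
  map f := ⟨f, fun _ => 𝟙 (𝟙_ C)⟩
  map_id _ := rfl
  map_comp _ _ := congrArg (Sigma.mk _) (funext fun _ => (Category.id_comp _).symm)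

/-- The functor `♭ : Fam(C) ⥤ Type` sending `(Y, B)` to `Σ y : Y, (𝟙_C ⟶ B y)`. -/
def flat : Fam.{v} C ⥤ Type v where
  obj A := Σ x : A.idx, (𝟙_ C ⟶ A.fib x)
  map f := TypeCat.ofHom fun s => ⟨f.1 s.1, s.2 ≫ f.2 s.1⟩
  map_id _ := congrArg TypeCat.ofHom
    (funext fun s => congrArg (Sigma.mk s.1) (Category.comp_id s.2))
  map_comp _ _ := congrArg TypeCat.ofHom
    (funext fun _ => congrArg (Sigma.mk _) (Category.assoc _ _ _).symm)

/-- The unit structure map of the strong monoidal functor `p`: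
the identity-index isomorphism `(PUnit, fun _ => 𝟙_C) ⟶ p PUnit`. -/
def pEpsHom : (unitObj : Fam.{v} C) ⟶ (p C).obj (𝟙_ (Type v)) :=
  ⟨fun _ => PUnit.unit, fun _ => 𝟙 (𝟙_ C)⟩

/-- The tensor structure map of the strong monoidal functor `p`:
`p X ⊗ p Y ⟶ p (X × Y)`, given by the identity on index types and the
left unitor `λ_ : 𝟙_C ⊗ 𝟙_C ≅ 𝟙_C` on fibers. -/
def pMuHom (X Y : Type v) :
    tensorObj' ((p C).obj X) ((p C).obj Y) ⟶ (p C).obj (X ⊗ Y) :=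
  ⟨fun q => (q.1, q.2), fun _ => (λ_ (𝟙_ C)).hom⟩

end Fam

open MonoidalCategory CategoryTheory.Functor.LaxMonoidal in
/-- The assertion that the given symmetric monoidal structure on `Fam(C)` is
the fiberwise one, that the given strong (symmetric) monoidal structure on `p`
has the specified structure maps, and that the adjunction `p ⊣ ♭` is a
monoidal adjunction. -/
def FamLNLSpec (C : Type u) [Category.{v} C] [MonoidalCategory C]
    [SymmetricCategory C]
    [MonoidalCategory (Fam.{v} C)] [SymmetricCategory (Fam.{v} C)]
    [(Fam.p C).Monoidal] [(Fam.p C).Braided] [(Fam.flat C).LaxMonoidal]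
    (adj : Fam.p C ⊣ Fam.flat C) : Prop :=
  (∀ A B : Fam.{v} C, A ⊗ B = Fam.tensorObj' A B) ∧
  (𝟙_ (Fam.{v} C) = Fam.unitObj) ∧
  HEq (ε (Fam.p C)) (Fam.pEpsHom C) ∧
  (∀ X Y : Type v, HEq (μ (Fam.p C) X Y) (Fam.pMuHom C X Y)) ∧
  adj.IsMonoidal

/-!
The structure of `Fam(C)` is fiberwise: on indices it is the cartesian structure of `Type`, on
fibers that of `C`. Every coherence equation in `Fam(C)` therefore has definitionally equal index
maps and reduces, fiber by fiber, to the same equation in `C`.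

The functor `p` lands in families constant at `𝟙_ C`, which is a commutative monoid object with
unit `𝟙` and multiplication `λ_ (𝟙_ C)`; the coherence laws making `p` strong monoidal and
braided are, fiberwise, exactly the monoid laws and the commutativity of `𝟙_ C`. Since `p` is a
strong monoidal left adjoint, its right adjoint `♭` inherits a lax monoidal structure for which
`p ⊣ ♭` is a monoidal adjunction (doctrinal adjunction).
-/

namespace Fam

open MonoidalCategory

section

variable {C : Type u} [Category.{v} C]

theorem hom_ext {A B : Fam.{w} C} {f g : A ⟶ B} (h₀ : f.1 = g.1)
    (h : ∀ x, f.2 x ≍ g.2 x) : f = g :=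
  Sigma.ext h₀ (Function.hfunext rfl fun x _ hx => by cases hx; exact h x)

variable [MonoidalCategory C]

instance : MonoidalCategoryStruct (Fam.{w} C) where
  tensorObj := tensorObj'
  tensorHom := tensorHom'
  whiskerLeft A _ _ g := ⟨fun x => (x.1, g.1 x.2), fun x => A.fib x.1 ◁ g.2 x.2⟩
  whiskerRight f B := ⟨fun x => (f.1 x.1, x.2), fun x => f.2 x.1 ▷ B.fib x.2⟩
  tensorUnit := unitObj
  associator A B D :=
    { hom := assocHom A B D
      inv := ⟨fun x => ((x.1, x.2.1), x.2.2), fun _ => (α_ _ _ _).inv⟩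
      hom_inv_id := hom_ext rfl fun _ => heq_of_eq <| (α_ _ _ _).hom_inv_id
      inv_hom_id := hom_ext rfl fun _ => heq_of_eq <| (α_ _ _ _).inv_hom_id }
  leftUnitor A :=
    { hom := leftUnitorHom A
      inv := ⟨fun x => (PUnit.unit, x), fun _ => (λ_ _).inv⟩
      hom_inv_id := hom_ext rfl fun _ => heq_of_eq <| (λ_ _).hom_inv_id
      inv_hom_id := hom_ext rfl fun _ => heq_of_eq <| (λ_ _).inv_hom_id }
  rightUnitor A :=
    { hom := rightUnitorHom A
      inv := ⟨fun x => (x, PUnit.unit), fun _ => (ρ_ _).inv⟩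
      hom_inv_id := hom_ext rfl fun _ => heq_of_eq <| (ρ_ _).hom_inv_id
      inv_hom_id := hom_ext rfl fun _ => heq_of_eq <| (ρ_ _).inv_hom_id }

instance : MonoidalCategory (Fam.{w} C) where
  tensorHom_def _ _ := hom_ext rfl fun _ => heq_of_eq <| tensorHom_def _ _
  id_tensorHom_id _ _ := hom_ext rfl fun _ => heq_of_eq <| id_tensorHom_id _ _
  tensorHom_comp_tensorHom _ _ _ _ :=
    hom_ext rfl fun _ => heq_of_eq <| tensorHom_comp_tensorHom _ _ _ _
  whiskerLeft_id _ _ := hom_ext rfl fun _ => heq_of_eq <| whiskerLeft_id _ _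
  id_whiskerRight _ _ := hom_ext rfl fun _ => heq_of_eq <| id_whiskerRight _ _
  associator_naturality _ _ _ := hom_ext rfl fun _ => heq_of_eq <| associator_naturality _ _ _
  leftUnitor_naturality _ := hom_ext rfl fun _ => heq_of_eq <| leftUnitor_naturality _
  rightUnitor_naturality _ := hom_ext rfl fun _ => heq_of_eq <| rightUnitor_naturality _
  pentagon _ _ _ _ := hom_ext rfl fun _ => heq_of_eq <| pentagon _ _ _ _
  triangle _ _ := hom_ext rfl fun _ => heq_of_eq <| triangle _ _

instance [SymmetricCategory C] : SymmetricCategory (Fam.{w} C) where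
  braiding A B :=
    { hom := braidHom A B
      inv := braidHom B A
      hom_inv_id := hom_ext rfl fun _ => heq_of_eq <| SymmetricCategory.symmetry _ _
      inv_hom_id := hom_ext rfl fun _ => heq_of_eq <| SymmetricCategory.symmetry _ _ }
  braiding_naturality_left _ _ :=
    hom_ext rfl fun _ => heq_of_eq <| BraidedCategory.braiding_naturality_left _ _
  braiding_naturality_right _ _ _ _ :=
    hom_ext rfl fun _ => heq_of_eq <| BraidedCategory.braiding_naturality_right _ _
  hexagon_forward _ _ _ := hom_ext rfl fun _ => heq_of_eq <| BraidedCategory.hexagon_forward _ _ _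
  hexagon_reverse _ _ _ := hom_ext rfl fun _ => heq_of_eq <| BraidedCategory.hexagon_reverse _ _ _
  symmetry _ _ := hom_ext rfl fun _ => heq_of_eq <| SymmetricCategory.symmetry _ _

end

section

variable (C : Type u) [Category.{v} C] [MonoidalCategory C]

instance : (p C).Monoidal :=
  Functor.CoreMonoidal.toMonoidal
    { εIso :=
        { hom := pEpsHom C
          inv := ⟨fun _ => PUnit.unit, fun _ => 𝟙 (𝟙_ C)⟩
          hom_inv_id := hom_ext rfl fun _ => heq_of_eq <| Category.id_comp _
          inv_hom_id := hom_ext rfl fun _ => heq_of_eq <| Category.id_comp _ }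
      μIso X Y :=
        { hom := pMuHom C X Y
          inv := ⟨fun q => (q.1, q.2), fun _ => (λ_ _).inv⟩
          hom_inv_id := hom_ext rfl fun _ => heq_of_eq <| (λ_ _).hom_inv_id
          inv_hom_id := hom_ext rfl fun _ => heq_of_eq <| (λ_ _).inv_hom_id }
      μIso_hom_natural_left _ _ := hom_ext rfl fun _ => heq_of_eq <|
        show 𝟙 _ ▷ _ ≫ (λ_ (𝟙_ C)).hom = (λ_ _).hom ≫ 𝟙 _ by simp
      μIso_hom_natural_right _ _ := hom_ext rfl fun _ => heq_of_eq <|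
        show _ ◁ 𝟙 _ ≫ (λ_ (𝟙_ C)).hom = (λ_ _).hom ≫ 𝟙 _ by simp
      associativity _ _ _ := hom_ext rfl fun _ => heq_of_eq <|
        show (λ_ (𝟙_ C)).hom ▷ _ ≫ (λ_ _).hom ≫ 𝟙 _ =
            (α_ _ _ _).hom ≫ _ ◁ (λ_ _).hom ≫ (λ_ _).hom by
          rw [Category.comp_id]; exact MonObj.mul_assoc (𝟙_ C)
      left_unitality _ := hom_ext rfl fun _ => heq_of_eq <|
        show (λ_ (𝟙_ C)).hom = 𝟙 _ ▷ _ ≫ (λ_ _).hom ≫ 𝟙 _ by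
          rw [Category.comp_id]; exact (MonObj.one_mul (𝟙_ C)).symm
      right_unitality _ := hom_ext rfl fun _ => heq_of_eq <|
        show (ρ_ (𝟙_ C)).hom = _ ◁ 𝟙 _ ≫ (λ_ _).hom ≫ 𝟙 _ by
          rw [Category.comp_id]; exact (MonObj.mul_one (𝟙_ C)).symm }

instance [SymmetricCategory C] : (p C).Braided where
  braided _ _ := hom_ext rfl fun _ => heq_of_eq <|
    show (λ_ (𝟙_ C)).hom ≫ 𝟙 _ = (β_ _ _).hom ≫ (λ_ _).hom by
      rw [Category.comp_id]; exact (IsCommMonObj.mul_comm (𝟙_ C)).symm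

def adjunction : p C ⊣ flat C where
  unit :=
    { app := fun _ => TypeCat.ofHom fun x => ⟨x, 𝟙 (𝟙_ C)⟩
      naturality := fun _ _ f => congrArg TypeCat.ofHom (funext fun x =>
        congrArg (Sigma.mk (f x)) (Category.id_comp _).symm) }
  counit :=
    { app := fun _ => ⟨fun s => s.1, fun s => s.2⟩
      naturality := fun _ _ _ => hom_ext rfl fun _ => heq_of_eq <| Category.id_comp _ }
  left_triangle_components _ := hom_ext rfl fun _ => heq_of_eq <| Category.id_comp _
  right_triangle_components _ := congrArg TypeCat.ofHom (funext fun s =>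
    congrArg (Sigma.mk s.1) (Category.id_comp s.2))

instance : (flat C).LaxMonoidal := (adjunction C).rightAdjointLaxMonoidal

end

end Fam

/-- For a symmetric monoidal category `C`, with `Type` carrying its cartesian
(symmetric) monoidal structure and `Fam(C)` the fiberwise symmetric monoidal
structure, the functor `p : Type ⥤ Fam(C)` is strong symmetric monoidal (with
the identity-index unit isomorphism and the left unitor on fibers), and the
adjunction `p ⊣ ♭` is a monoidal adjunction: `(Fam(C), p ⊣ ♭)` is a
linear-non-linear model in the sense of Benton. -/
theorem fam_linear_non_linear_model (C : Type u) [Category.{v} C]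
    [MonoidalCategory C] [SymmetricCategory C] :
    ∃ (M : MonoidalCategory (Fam.{v} C)) (S : @SymmetricCategory _ _ M)
      (L : @Functor.Monoidal (Type v) _ _ (Fam.{v} C) _ M (Fam.p C))
      (B : @Functor.Braided (Type v) _ _ _ (Fam.{v} C) _ M
        (@SymmetricCategory.toBraidedCategory _ _ M S) (Fam.p C))
      (Gfl : @Functor.LaxMonoidal (Fam.{v} C) _ M (Type v) _ _ (Fam.flat C))
      (adj : Fam.p C ⊣ Fam.flat C),
      @FamLNLSpec C _ _ _ M S L B Gfl adj :=
  ⟨inferInstance, inferInstance, inferInstance, inferInstance, inferInstance, Fam.adjunction C,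
    fun _ _ => rfl, rfl, HEq.rfl, fun _ _ => HEq.rfl, inferInstance⟩
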